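/- Let A be a Σ-algebra with i ∈ C, so that !_i a · b ≤ !_i a · b · !_i a for all a, b ∈ A. Then in the canonical extension A^σ, for all filter elements x, y: !_i^σ x ·^σ y ≤ !_i^σ x ·^σ y ·^σ !_i^σ x. -/

import Mathlib

/-- Filter elements of a canonical extension: meets of elements of `A`. -/
def IsFiltElt {A Aσ : Type*} [CompleteLattice Aσ] (e : A → Aσ) (x : Aσ) : Prop :=
  ∃ S : Set A, x = sInf (e '' S)

/-- The product `·^σ` on filter elements. -/
def prodF {A Aσ : Type*} [Mul A] [CompleteLattice Aσ] (e : A → Aσ) (x y : Aσ) : Aσ :=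
  sInf {z | ∃ a b : A, x ≤ e a ∧ y ≤ e b ∧ z = e (a * b)}

/-- The extension `!^σ` of a modality on filter elements. -/
def bangF {A Aσ : Type*} [CompleteLattice Aσ] (e : A → Aσ) (bang : A → A) (x : Aσ) : Aσ :=
  sInf {z | ∃ a : A, x ≤ e a ∧ z = e (bang a)}

/-! Both `!_i^σ x` and `(!_i^σ x) ·^σ y` are meets of down-directed subsets of `A` (as `!_i`
preserves `⊓` and `·` is monotone), so by compactness such a meet lies below `c ∈ A` only if a
single member of the subset does. Given `(!_i^σ x) ·^σ y ≤ c` and `!_i^σ x ≤ d`, this yields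
`a · b ≤ c` with `!_i^σ x ≤ a`, `y ≤ b`, and then `!_i a₁ ≤ a ⊓ d` with `x ≤ a₁`; contraction in
`A` gives `!_i a₁ · b ≤ !_i a₁ · b · !_i a₁ ≤ c · d`. -/

theorem DirectedOn.exists_mem_forall_le_of_finset_subset {α : Type*} [Preorder α] {S : Set α}
    (hdir : DirectedOn (· ≥ ·) S) (hne : S.Nonempty) (F : Finset α) (hF : ↑F ⊆ S) :
    ∃ s ∈ S, ∀ t ∈ F, s ≤ t := by
  classical
  induction F using Finset.induction_on with
  | empty => exact hne.imp fun s hs => ⟨hs, by simp⟩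
  | @insert a F _ ih =>
    obtain ⟨s, hs, hsF⟩ := ih (fun t ht => hF (Finset.mem_insert_of_mem ht))
    obtain ⟨u, hu, hua, hus⟩ := hdir a (hF (Finset.mem_insert_self a F)) s hs
    refine ⟨u, hu, fun t ht => ?_⟩
    rcases Finset.mem_insert.mp ht with rfl | ht
    · exact hua
    · exact hus.trans (hsF t ht)

theorem bangF_le {A Aσ : Type*} [CompleteLattice Aσ] {e : A → Aσ} {bang : A → A} {x : Aσ}
    {a : A} (hxa : x ≤ e a) : bangF e bang x ≤ e (bang a) :=
  sInf_le ⟨a, hxa, rfl⟩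

theorem prodF_le {A Aσ : Type*} [Mul A] [CompleteLattice Aσ] {e : A → Aσ} {x y : Aσ} {a b : A}
    (hxa : x ≤ e a) (hyb : y ≤ e b) : prodF e x y ≤ e (a * b) :=
  sInf_le ⟨a, b, hxa, hyb, rfl⟩

theorem infClosed_setOf_le_map {A Aσ : Type*} [SemilatticeInf A] [SemilatticeInf Aσ]
    {e : A → Aσ} (hemeet : ∀ a b : A, e (a ⊓ b) = e a ⊓ e b) (x : Aσ) :
    InfClosed {a | x ≤ e a} :=
  fun a ha b hb => by simpa only [Set.mem_ofPred_eq, hemeet] using le_inf ha hb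

section CanonicalExtension

variable {A Aσ : Type*} [Lattice A] [BoundedOrder A] [CompleteLattice Aσ] {e : A → Aσ}

theorem exists_mem_le_of_sInf_image_le
    (hcompact : ∀ S T : Set A, sInf (e '' S) ≤ sSup (e '' T) →
      ∃ S' T' : Finset A, ↑S' ⊆ S ∧ ↑T' ⊆ T ∧ S'.inf id ≤ T'.sup id)
    {S : Set A} (hne : S.Nonempty) (hdir : DirectedOn (· ≥ ·) S) {c : A}
    (h : sInf (e '' S) ≤ e c) : ∃ s ∈ S, s ≤ c := by
  obtain ⟨S', T', hS', hT', hle⟩ := hcompact S {c} (by simpa using h)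
  obtain ⟨s, hs, hsS'⟩ := hdir.exists_mem_forall_le_of_finset_subset hne S' hS'
  refine ⟨s, hs, ?_⟩
  calc s ≤ S'.inf id := Finset.le_inf hsS'
    _ ≤ T'.sup id := hle
    _ ≤ c := Finset.sup_le fun t ht => (Set.mem_singleton_iff.mp (hT' ht)).le

theorem exists_le_of_bangF_le (hemeet : ∀ a b : A, e (a ⊓ b) = e a ⊓ e b)
    (hcompact : ∀ S T : Set A, sInf (e '' S) ≤ sSup (e '' T) →
      ∃ S' T' : Finset A, ↑S' ⊆ S ∧ ↑T' ⊆ T ∧ S'.inf id ≤ T'.sup id)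
    {bang : A → A} (hbang : ∀ a b : A, bang (a ⊓ b) = bang a ⊓ bang b)
    {x : Aσ} {d : A} (h : bangF e bang x ≤ e d) : ∃ a, x ≤ e a ∧ bang a ≤ d := by
  have hset : {z | ∃ a : A, x ≤ e a ∧ z = e (bang a)} = e '' (bang '' {a | x ≤ e a}) := by
    ext z
    simp [eq_comm]
  rw [bangF, hset] at h
  have hne : {a | x ≤ e a}.Nonempty := by
    by_contra! hempty
    rw [hempty, Set.image_empty, Set.image_empty, sInf_empty, top_le_iff] at h
    have hd : d ∈ {a | x ≤ e a} := by simp [h]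
    simp [hempty] at hd
  have hdir : DirectedOn (· ≥ ·) (bang '' {a | x ≤ e a}) := by
    rintro _ ⟨a₁, h₁, rfl⟩ _ ⟨a₂, h₂, rfl⟩
    refine ⟨bang (a₁ ⊓ a₂), ⟨a₁ ⊓ a₂, infClosed_setOf_le_map hemeet x h₁ h₂, rfl⟩, ?_, ?_⟩
    · simp [hbang]
    · simp [hbang]
  obtain ⟨_, ⟨a, ha, rfl⟩, hle⟩ :=
    exists_mem_le_of_sInf_image_le hcompact (hne.image bang) hdir h
  exact ⟨a, ha, hle⟩

theorem exists_le_of_prodF_le [Mul A] (hemeet : ∀ a b : A, e (a ⊓ b) = e a ⊓ e b)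
    (hcompact : ∀ S T : Set A, sInf (e '' S) ≤ sSup (e '' T) →
      ∃ S' T' : Finset A, ↑S' ⊆ S ∧ ↑T' ⊆ T ∧ S'.inf id ≤ T'.sup id)
    (hmulmono : ∀ a b c d : A, a ≤ b → c ≤ d → a * c ≤ b * d)
    {x y : Aσ} {c : A} (h : prodF e x y ≤ e c) : ∃ a b, x ≤ e a ∧ y ≤ e b ∧ a * b ≤ c := by
  have hset : {z | ∃ a b : A, x ≤ e a ∧ y ≤ e b ∧ z = e (a * b)} =
      e '' Set.image2 (· * ·) {a | x ≤ e a} {b | y ≤ e b} := by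
    ext z
    simp [-Set.image2_mul, Set.mem_image2, eq_comm, and_assoc]
  rw [prodF, hset] at h
  have hne : (Set.image2 (· * ·) {a | x ≤ e a} {b | y ≤ e b}).Nonempty := by
    by_contra! hempty
    rw [hempty, Set.image_empty, sInf_empty, top_le_iff] at h
    have hc : c * c ∈ Set.image2 (· * ·) {a | x ≤ e a} {b | y ≤ e b} :=
      Set.mem_image2_of_mem (by simp [h]) (by simp [h])
    simp [hempty] at hc
  have hdir : DirectedOn (· ≥ ·) (Set.image2 (· * ·) {a | x ≤ e a} {b | y ≤ e b}) := by
    rintro _ ⟨a₁, ha₁, b₁, hb₁, rfl⟩ _ ⟨a₂, ha₂, b₂, hb₂, rfl⟩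
    exact ⟨(a₁ ⊓ a₂) * (b₁ ⊓ b₂),
      Set.mem_image2_of_mem (infClosed_setOf_le_map hemeet x ha₁ ha₂)
        (infClosed_setOf_le_map hemeet y hb₁ hb₂),
      hmulmono _ _ _ _ inf_le_left inf_le_left, hmulmono _ _ _ _ inf_le_right inf_le_right⟩
  obtain ⟨_, ⟨a, ha, b, hb, rfl⟩, hle⟩ := exists_mem_le_of_sInf_image_le hcompact hne hdir h
  exact ⟨a, b, ha, hb, hle⟩

end CanonicalExtension

theorem stmt13_general {A Aσ ι : Type*} [Lattice A] [BoundedOrder A] [Mul A] [CompleteLattice Aσ]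
    (e : A → Aσ)
    (hemeet : ∀ a b : A, e (a ⊓ b) = e a ⊓ e b)
    (hcompact : ∀ S T : Set A, sInf (e '' S) ≤ sSup (e '' T) →
      ∃ S' T' : Finset A, ↑S' ⊆ S ∧ ↑T' ⊆ T ∧ S'.inf id ≤ T'.sup id)
    (bang : ι → A → A) (i : ι)
    (hmulmono : ∀ a b c d : A, a ≤ b → c ≤ d → a * c ≤ b * d)
    (hbangmeet : ∀ (l : ι) (a b : A), bang l (a ⊓ b) = bang l a ⊓ bang l b)
    -- `i ∈ C`: non-local contraction holds in `A`
    (hcontr : ∀ a b : A, bang i a * b ≤ bang i a * b * bang i a)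
    (x y : Aσ) :
    prodF e (bangF e (bang i) x) y ≤
      prodF e (prodF e (bangF e (bang i) x) y) (bangF e (bang i) x) := by
  refine le_sInf ?_
  rintro _ ⟨c, d, hc, hd, rfl⟩
  obtain ⟨a, b, ha, hb, hab⟩ := exists_le_of_prodF_le hemeet hcompact hmulmono hc
  obtain ⟨a₁, ha₁, had⟩ := exists_le_of_bangF_le hemeet hcompact (hbangmeet i)
    (show bangF e (bang i) x ≤ e (a ⊓ d) from hemeet a d ▸ le_inf ha hd)
  calc prodF e (bangF e (bang i) x) y ≤ e (bang i a₁ * b) := prodF_le (bangF_le ha₁) hb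
    _ ≤ e (c * d) := Monotone.of_map_inf hemeet <|
      calc bang i a₁ * b ≤ bang i a₁ * b * bang i a₁ := hcontr a₁ b
        _ ≤ c * d := hmulmono _ _ _ _
          ((hmulmono _ _ _ _ (had.trans inf_le_left) le_rfl).trans hab)
          (had.trans inf_le_right)

/-- Non-local contraction lifts to filter elements of the canonical extension. -/
theorem stmt13 {A Aσ ι : Type*} [Lattice A] [BoundedOrder A] [Mul A] [CompleteLattice Aσ]
    (e : A → Aσ)
    (he : ∀ a b : A, e a ≤ e b ↔ a ≤ b)
    (hemeet : ∀ a b : A, e (a ⊓ b) = e a ⊓ e b)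
    (hcompact : ∀ S T : Set A, sInf (e '' S) ≤ sSup (e '' T) →
      ∃ S' T' : Finset A, ↑S' ⊆ S ∧ ↑T' ⊆ T ∧ S'.inf id ≤ T'.sup id)
    (bang : ι → A → A) (i : ι)
    (hmulmono : ∀ a b c d : A, a ≤ b → c ≤ d → a * c ≤ b * d)
    (hbangmeet : ∀ (l : ι) (a b : A), bang l (a ⊓ b) = bang l a ⊓ bang l b)
    -- `i ∈ C`: non-local contraction holds in `A`
    (hcontr : ∀ a b : A, bang i a * b ≤ bang i a * b * bang i a)
    (x y : Aσ) (hx : IsFiltElt e x) (hy : IsFiltElt e y) :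
    prodF e (bangF e (bang i) x) y ≤
      prodF e (prodF e (bangF e (bang i) x) y) (bangF e (bang i) x) :=
  stmt13_general e hemeet hcompact bang i hmulmono hbangmeet hcontr x y
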